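/- arXiv:2111.05771 — 3 statements merged into one kernel-verified Lean document; each statement's English description precedes it below -/
import Mathlib

section
/- Every standard nonexpansive simple, properly ordered Bratteli-Vershik system has unbounded width: for every R there exists a level with more than R vertices. -/
set_option autoImplicit false

/-- An ordered Bratteli diagram: finite nonempty vertex sets `V n`, a single root
vertex at level `0`, finite edge sets `E n` (edges from level `n` to level `n+1`,
multiple edges allowed), every vertex has an outgoing edge, every non-root vertex
an incoming edge, and the edges into each vertex carry a linear order, encoded by
the relation `elt` which relates only edges with the same target. -/
structure BDiagram where
  V : ℕ → Type
  E : ℕ → Type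
  fintV : ∀ n, Fintype (V n)
  fintE : ∀ n, Fintype (E n)
  nonV : ∀ n, Nonempty (V n)
  rootSubsingleton : Subsingleton (V 0)
  src : ∀ {n}, E n → V n
  tgt : ∀ {n}, E n → V (n + 1)
  hasOut : ∀ (n : ℕ) (v : V n), ∃ e : E n, src e = v
  hasIn : ∀ (n : ℕ) (v : V (n + 1)), ∃ e : E n, tgt e = v
  elt : ∀ {n}, E n → E n → Prop
  elt_tgt : ∀ (n : ℕ) (e f : E n), elt e f → tgt e = tgt f
  elt_irrefl : ∀ (n : ℕ) (e : E n), ¬ elt e e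
  elt_trans : ∀ (n : ℕ) (e f g : E n), elt e f → elt f g → elt e g
  elt_total : ∀ (n : ℕ) (e f : E n), tgt e = tgt f → e ≠ f → elt e f ∨ elt f e

namespace BDiagram

variable (B : BDiagram)

def castV {m n : ℕ} (h : m = n) (v : B.V m) : B.V n := h ▸ v

/-- An edge is minimal if no edge (into the same target) is below it. -/
def IsMinEdge {n : ℕ} (e : B.E n) : Prop := ∀ e' : B.E n, ¬ B.elt e' e

/-- An edge is maximal if no edge (into the same target) is above it. -/
def IsMaxEdge {n : ℕ} (e : B.E n) : Prop := ∀ e' : B.E n, ¬ B.elt e e'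

/-- The space of infinite paths from the root. -/
def PathSpace : Type := { x : ∀ n, B.E n // ∀ n, B.tgt (x n) = B.src (x (n + 1)) }

def IsMinPath (x : B.PathSpace) : Prop := ∀ n, B.IsMinEdge (x.1 n)

def IsMaxPath (x : B.PathSpace) : Prop := ∀ n, B.IsMaxEdge (x.1 n)

/-- Properly ordered: unique minimal and unique maximal path. -/
def ProperlyOrdered : Prop :=
  (∃! x : B.PathSpace, B.IsMinPath x) ∧ (∃! x : B.PathSpace, B.IsMaxPath x)

/-- The partial order on cofinal paths: `x < y` iff they eventually agree and at the
last disagreement the edge of `x` is below the edge of `y`. -/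
def pathLT (x y : B.PathSpace) : Prop :=
  ∃ N : ℕ, B.elt (x.1 N) (y.1 N) ∧ ∀ n : ℕ, N < n → x.1 n = y.1 n

/-- `T` is the Vershik map: each non-maximal path goes to its successor, and each
maximal path goes to a minimal path. -/
def IsVershik (T : B.PathSpace ≃ B.PathSpace) : Prop :=
  (∀ x : B.PathSpace, ¬ B.IsMaxPath x →
    B.pathLT x (T x) ∧ ∀ z : B.PathSpace, B.pathLT x z → ¬ B.pathLT z (T x)) ∧
  (∀ x : B.PathSpace, B.IsMaxPath x → B.IsMinPath (T x))

/-- `f` is a chain of consecutive edges on levels `[a, b)`. -/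
def SegOn (f : ∀ i, B.E i) (a b : ℕ) : Prop :=
  ∀ i : ℕ, a ≤ i → i + 1 < b → B.tgt (f i) = B.src (f (i + 1))

/-- Simplicity: some telescoping has complete connections between adjacent levels. -/
def Simple : Prop :=
  ∃ ns : ℕ → ℕ, StrictMono ns ∧ ns 0 = 0 ∧
    ∀ (l c : ℕ), ns (l + 1) = c + 1 →
      ∀ (v : B.V (ns l)) (w : B.V (c + 1)),
        ∃ f : ∀ i, B.E i, B.SegOn f (ns l) (c + 1) ∧ B.src (f (ns l)) = v ∧ B.tgt (f c) = w

/-- The natural (Cantor) topology on the path space, induced from the product of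
the discrete topologies on the edge sets. -/
def pathTop : TopologicalSpace B.PathSpace :=
  TopologicalSpace.induced Subtype.val (@Pi.topologicalSpace ℕ B.E (fun _ => ⊥))

/-- Integer iterates of a bijection of the path space. -/
def iterZ (T : B.PathSpace ≃ B.PathSpace) (m : ℤ) : B.PathSpace ≃ B.PathSpace :=
  (T : Equiv.Perm B.PathSpace) ^ m

/-- Two paths have the same `k`-coding: for every time `m` the initial segments of
`T^m x` and `T^m y` from the root to level `k` coincide. -/
def SameCoding (T : B.PathSpace ≃ B.PathSpace) (k : ℕ) (x y : B.PathSpace) : Prop :=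
  ∀ (m : ℤ) (i : ℕ), i < k → ((B.iterZ T m) x).1 i = ((B.iterZ T m) y).1 i

/-- A depth `k` pair: distinct paths with the same `k`-coding but not the same
`(k+1)`-coding. -/
def DepthPair (T : B.PathSpace ≃ B.PathSpace) (k : ℕ) (x y : B.PathSpace) : Prop :=
  x ≠ y ∧ B.SameCoding T k x y ∧ ¬ B.SameCoding T (k + 1) x y

/-- The pair `x, y` has a `j` cut: for some time `m`, both `T^m x` and `T^m y` are
minimal from the root into level `j`. -/
def HasCut (T : B.PathSpace ≃ B.PathSpace) (j : ℕ) (x y : B.PathSpace) : Prop :=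
  ∃ m : ℤ, (∀ i : ℕ, i < j → B.IsMinEdge (((B.iterZ T m) x).1 i)) ∧
    (∀ i : ℕ, i < j → B.IsMinEdge (((B.iterZ T m) y).1 i))

/-- Nonexpansive: for every `k ≥ 1` there are two distinct paths with the same
`k`-coding. -/
def Nonexpansive (T : B.PathSpace ≃ B.PathSpace) : Prop :=
  ∀ k : ℕ, 1 ≤ k → ∃ x y : B.PathSpace, x ≠ y ∧ B.SameCoding T k x y

/-- Well timed: for every `k ≥ 1` and every `j > k` there is a depth `k` pair with
a `j` cut. -/
def WellTimed (T : B.PathSpace ≃ B.PathSpace) : Prop :=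
  ∀ k : ℕ, 1 ≤ k → ∀ j : ℕ, k < j →
    ∃ x y : B.PathSpace, B.DepthPair T k x y ∧ B.HasCut T j x y

/-- Very well timed: for every `k ≥ 1` there is a depth `k` pair having a `j` cut
for every `j > k`. -/
def VeryWellTimed (T : B.PathSpace ≃ B.PathSpace) : Prop :=
  ∀ k : ℕ, 1 ≤ k →
    ∃ x y : B.PathSpace, B.DepthPair T k x y ∧ ∀ j : ℕ, k < j → B.HasCut T j x y

/-- Weakly well timed: for infinitely many `k ≥ 1`, for every `j > k` there is a
depth `k` pair with a `j` cut. -/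
def WeaklyWellTimed (T : B.PathSpace ≃ B.PathSpace) : Prop :=
  ∀ K : ℕ, ∃ k : ℕ, K ≤ k ∧ 1 ≤ k ∧ ∀ j : ℕ, k < j →
    ∃ x y : B.PathSpace, B.DepthPair T k x y ∧ B.HasCut T j x y

/-- Untimed: for every `k ≥ 1` there is a `j > k` such that no depth `k` pair has a
`j` cut. -/
def Untimed (T : B.PathSpace ≃ B.PathSpace) : Prop :=
  ∀ k : ℕ, 1 ≤ k → ∃ j : ℕ, k < j ∧
    ∀ x y : B.PathSpace, B.DepthPair T k x y → ¬ B.HasCut T j x y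

/-- Very untimed: for every `k ≥ 1`, no depth `k` pair has a `(k+1)` cut. -/
def VeryUntimed (T : B.PathSpace ≃ B.PathSpace) : Prop :=
  ∀ k : ℕ, 1 ≤ k →
    ∀ x y : B.PathSpace, B.DepthPair T k x y → ¬ B.HasCut T (k + 1) x y

/-- Finite paths from the root to level `n`. -/
def FinPath (n : ℕ) : Type :=
  { f : (i : Fin n) → B.E i.val //
    ∀ (i : ℕ) (h : i + 1 < n), B.tgt (f ⟨i, by omega⟩) = B.src (f ⟨i + 1, h⟩) }

/-- The lexicographic (from the end) order on finite paths to level `n` induced by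
the orders on the edges. -/
def finLT {n : ℕ} (p q : B.FinPath n) : Prop :=
  ∃ (N : ℕ) (h : N < n), B.elt (p.1 ⟨N, h⟩) (q.1 ⟨N, h⟩) ∧
    ∀ (i : ℕ) (hi : i < n), N < i → p.1 ⟨i, hi⟩ = q.1 ⟨i, hi⟩

/-- The finite path `p` to level `n` ends at the vertex `v`. -/
def EndsAt {n : ℕ} (p : B.FinPath n) (v : B.V n) : Prop :=
  ∀ (m : ℕ) (h : n = m + 1), B.tgt (p.1 ⟨m, by omega⟩) = B.castV h v

/-- The initial segment of an infinite path, from the root to level `n`. -/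
def pathInit (x : B.PathSpace) (n : ℕ) : B.FinPath n :=
  ⟨fun i => x.1 i.val, fun i _ => x.2 i⟩

/-- The vertex of an infinite path at level `n`. -/
def pathVert (x : B.PathSpace) (n : ℕ) : B.V n := B.src (x.1 n)

theorem pathInit_endsAt (x : B.PathSpace) (n : ℕ) :
    B.EndsAt (B.pathInit x n) (B.pathVert x n) := by
  intro m h
  subst h
  exact x.2 m

/-- Truncation of a finite path to a lower level. -/
def truncTo {n : ℕ} (k : ℕ) (hk : k ≤ n) (p : B.FinPath n) : B.FinPath k :=
  ⟨fun i => p.1 ⟨i.val, by omega⟩, fun i h => p.2 i (by omega)⟩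

/-- Paths `x, x'` are `k`-equivalent at level `n`: there is an order isomorphism
between the sets of finite paths from the root into their level-`n` vertices which
preserves truncations to level `k` (equality of `k`-basic blocks) and which matches
the initial segment of `x` with the initial segment of `x'` (the "dot" is in the
same place). -/
def KEquivAt (k n : ℕ) (x x' : B.PathSpace) : Prop :=
  ∃ φ : { p : B.FinPath n // B.EndsAt p (B.pathVert x n) } ≃
      { p : B.FinPath n // B.EndsAt p (B.pathVert x' n) },
    (∀ p q, B.finLT p.1 q.1 ↔ B.finLT (φ p).1 (φ q).1) ∧
    (∀ p (i : ℕ) (hik : i < k) (hin : i < n), ((φ p).1).1 ⟨i, hin⟩ = (p.1).1 ⟨i, hin⟩) ∧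
    φ ⟨B.pathInit x n, B.pathInit_endsAt x n⟩ = ⟨B.pathInit x' n, B.pathInit_endsAt x' n⟩

/-- Paths are `k`-equivalent: they agree from the root to level `k` and are
`k`-equivalent at every level `n > k`. -/
def KEquivPaths (k : ℕ) (x x' : B.PathSpace) : Prop :=
  (∀ i : ℕ, i < k → x.1 i = x'.1 i) ∧ ∀ n : ℕ, k < n → B.KEquivAt k n x x'

/-- Standard nonexpansive: for every `k ≥ 1` there is a pair of distinct
`k`-equivalent paths. -/
def SNE : Prop := ∀ k : ℕ, 1 ≤ k → ∃ x x' : B.PathSpace, x ≠ x' ∧ B.KEquivPaths k x x'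

/-!  ### Telescoping  -/

theorem castV_eq_of_heq {m n : ℕ} (h : m = n) {v : B.V m} {w : B.V n} (hw : HEq v w) :
    B.castV h v = w := by
  subst h
  exact eq_of_heq hw

theorem castV_heq {m n : ℕ} (h : m = n) (v : B.V m) : HEq (B.castV h v) v := by
  subst h
  rfl

theorem castV_inj {m n : ℕ} (h : m = n) {v w : B.V m}
    (hvw : B.castV h v = B.castV h w) : v = w := by
  subst h
  exact hvw

def castE {m n : ℕ} (h : m = n) (e : B.E m) : B.E n := h ▸ e

noncomputable def chainFrom (a : ℕ) (v : B.V a) : (i : ℕ) → B.E (a + i)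
  | 0 => (B.hasOut a v).choose
  | i + 1 => (B.hasOut (a + i + 1) (B.tgt (chainFrom a v i))).choose

theorem chainFrom_src_zero (a : ℕ) (v : B.V a) : B.src (B.chainFrom a v 0) = v :=
  (B.hasOut a v).choose_spec

theorem chainFrom_src_succ (a : ℕ) (v : B.V a) (i : ℕ) :
    B.src (B.chainFrom a v (i + 1)) = B.tgt (B.chainFrom a v i) :=
  (B.hasOut (a + i + 1) (B.tgt (B.chainFrom a v i))).choose_spec

noncomputable def chainTo (a : ℕ) : (j : ℕ) → (w : B.V (a + j + 1)) → (i : ℕ) → i ≤ j → B.E (a + i)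
  | 0, w, i, _ => B.castE (by omega : a + 0 = a + i) (B.hasIn a w).choose
  | j + 1, w, i, _ =>
      if h : i ≤ j then chainTo a j (B.src (B.hasIn (a + j + 1) w).choose) i h
      else B.castE (by omega : a + (j + 1) = a + i) (B.hasIn (a + j + 1) w).choose

theorem chainTo_tgt_last (a : ℕ) : ∀ (j : ℕ) (w : B.V (a + j + 1)),
    B.tgt (B.chainTo a j w j le_rfl) = w := by
  intro j w
  cases j with
  | zero =>
      simp only [chainTo]
      exact (B.hasIn a w).choose_spec
  | succ j =>
      simp only [chainTo]
      rw [dif_neg (by omega : ¬ j + 1 ≤ j)]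
      exact (B.hasIn (a + j + 1) w).choose_spec

theorem chainTo_chain (a : ℕ) : ∀ (j : ℕ) (w : B.V (a + j + 1)) (i : ℕ) (h : i + 1 ≤ j)
    (h' : i ≤ j), B.tgt (B.chainTo a j w i h') = B.src (B.chainTo a j w (i + 1) h) := by
  intro j
  induction j with
  | zero => intro w i h h'; omega
  | succ j ih =>
      intro w i h h'
      by_cases hij : i + 1 ≤ j
      · simp only [chainTo]
        rw [dif_pos (by omega : i ≤ j), dif_pos hij]
        exact ih _ i hij (by omega)
      · have hi : i = j := by omega
        subst hi
        simp only [chainTo]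
        rw [dif_pos (le_refl i), dif_neg (by omega : ¬ i + 1 ≤ i)]
        exact B.chainTo_tgt_last a i _


def TelE (a b : ℕ) : Type :=
  { f : (i : Fin (b - a)) → B.E (a + i.val) //
    ∀ (i : ℕ) (h : i + 1 < b - a), B.tgt (f ⟨i, by omega⟩) = B.src (f ⟨i + 1, h⟩) }

def telSrc {a b : ℕ} (hab : a < b) (f : B.TelE a b) : B.V a :=
  B.src (f.1 ⟨0, by omega⟩)

def telTgt {a b : ℕ} (hab : a < b) (f : B.TelE a b) : B.V b :=
  B.castV (by omega : a + (b - a - 1) + 1 = b) (B.tgt (f.1 ⟨b - a - 1, by omega⟩))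

def telLT {a b : ℕ} (f g : B.TelE a b) : Prop :=
  ∃ (N : ℕ) (h : N < b - a), B.elt (f.1 ⟨N, h⟩) (g.1 ⟨N, h⟩) ∧
    ∀ (i : ℕ) (hi : i < b - a), N < i → f.1 ⟨i, hi⟩ = g.1 ⟨i, hi⟩

noncomputable def Telescope (ns : ℕ → ℕ) (hmono : StrictMono ns) (h0 : ns 0 = 0) : BDiagram where
  V l := B.V (ns l)
  E l := B.TelE (ns l) (ns (l + 1))
  fintV l := B.fintV (ns l)
  fintE l := by
    classical
    letI : ∀ i : Fin (ns (l + 1) - ns l), Fintype (B.E (ns l + i.val)) := fun i => B.fintE _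
    exact Subtype.fintype _
  nonV l := B.nonV (ns l)
  rootSubsingleton := by show Subsingleton (B.V (ns 0)); rw [h0]; exact B.rootSubsingleton
  src {l} f := B.telSrc (hmono (Nat.lt_succ_self l)) f
  tgt {l} f := B.telTgt (hmono (Nat.lt_succ_self l)) f
  hasOut := by
    intro l v
    refine ⟨⟨fun i => B.chainFrom (ns l) v i.val,
      fun i h => (B.chainFrom_src_succ (ns l) v i).symm⟩, ?_⟩
    exact B.chainFrom_src_zero (ns l) v
  hasIn := by
    intro l w
    have hab : ns l < ns (l + 1) := hmono (Nat.lt_succ_self l)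
    have hj : ns l + (ns (l + 1) - ns l - 1) + 1 = ns (l + 1) := by omega
    refine ⟨⟨fun i => B.chainTo (ns l) (ns (l + 1) - ns l - 1) (B.castV hj.symm w) i.val
        (by omega), fun i h => B.chainTo_chain _ _ _ i (by omega) (by omega)⟩, ?_⟩
    show B.castV (by omega) (B.tgt (B.chainTo (ns l) (ns (l + 1) - ns l - 1)
      (B.castV hj.symm w) (ns (l + 1) - ns l - 1) (by omega))) = w
    rw [B.chainTo_tgt_last]
    exact B.castV_eq_of_heq _ (B.castV_heq _ w)
  elt {l} f g := B.telLT f g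
  elt_tgt := by
    rintro l f g ⟨N, hN, hlt, hgt⟩
    show B.telTgt _ f = B.telTgt _ g
    unfold telTgt
    refine congrArg (B.castV _) ?_
    rcases eq_or_lt_of_le (show N ≤ ns (l + 1) - ns l - 1 by omega) with h | h
    · subst h
      exact B.elt_tgt _ _ _ hlt
    · exact congrArg B.tgt (hgt _ (by omega) h)
  elt_irrefl := by
    rintro l f ⟨N, h, hlt, -⟩
    exact B.elt_irrefl _ _ hlt
  elt_trans := by
    rintro l f g h ⟨N₁, hN₁, hlt₁, hgt₁⟩ ⟨N₂, hN₂, hlt₂, hgt₂⟩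
    rcases lt_trichotomy N₁ N₂ with hc | hc | hc
    · exact ⟨N₂, hN₂, by rw [hgt₁ N₂ hN₂ hc]; exact hlt₂,
        fun i hi hN => (hgt₁ i hi (by omega)).trans (hgt₂ i hi hN)⟩
    · subst hc
      exact ⟨N₁, hN₁, B.elt_trans _ _ _ _ hlt₁ hlt₂,
        fun i hi hN => (hgt₁ i hi hN).trans (hgt₂ i hi hN)⟩
    · refine ⟨N₁, hN₁, ?_, fun i hi hN => (hgt₁ i hi hN).trans (hgt₂ i hi (by omega))⟩
      rw [← hgt₂ N₁ hN₁ hc]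
      exact hlt₁
  elt_total := by
    intro l f g htgt hne
    classical
    have hab : ns l < ns (l + 1) := hmono (Nat.lt_succ_self l)
    set b := ns (l + 1) - ns l with hb
    have hex : ∃ N, ∃ h : N < b, f.1 ⟨N, h⟩ ≠ g.1 ⟨N, h⟩ := by
      by_contra hco
      push_neg at hco
      exact hne (Subtype.ext (funext fun i => hco i.val i.isLt))
    set P : ℕ → Prop := fun N => ∃ h : N < b, f.1 ⟨N, h⟩ ≠ g.1 ⟨N, h⟩ with hP
    obtain ⟨N₀, hN₀⟩ := hex
    set N := Nat.findGreatest P b with hNdef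
    have hPN : P N := Nat.findGreatest_spec (le_of_lt hN₀.choose) hN₀
    have hafter : ∀ i (hi : i < b), N < i → f.1 ⟨i, hi⟩ = g.1 ⟨i, hi⟩ := by
      intro i hi hNi
      by_contra hcon
      exact Nat.findGreatest_is_greatest hNi (le_of_lt hi) ⟨hi, hcon⟩
    clear_value N
    obtain ⟨hNb, hNne⟩ := hPN
    have htgtN : B.tgt (f.1 ⟨N, hNb⟩) = B.tgt (g.1 ⟨N, hNb⟩) := by
      rcases eq_or_lt_of_le (show N ≤ b - 1 by omega) with h | h
      · -- N is the last index; use equality of targets of the composite edges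
        subst h
        exact B.castV_inj _ htgt
      · have h2 : f.1 ⟨N + 1, by omega⟩ = g.1 ⟨N + 1, by omega⟩ :=
          hafter (N + 1) (by omega) (by omega)
        rw [f.2 N (by omega), g.2 N (by omega), h2]
    rcases B.elt_total _ _ _ htgtN hNne with h | h
    · exact Or.inl ⟨N, hNb, h, hafter⟩
    · exact Or.inr ⟨N, hNb, h, fun i hi hN => (hafter i hi hN).symm⟩

def teleMap (ns : ℕ → ℕ) (hmono : StrictMono ns) (h0 : ns 0 = 0) (x : B.PathSpace) :
    (B.Telescope ns hmono h0).PathSpace :=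
  ⟨fun l => ⟨fun i => x.1 (ns l + i.val), fun i _ => x.2 (ns l + i)⟩, fun l => by
    have hab : ns l < ns (l + 1) := hmono (Nat.lt_succ_self l)
    have hm : ns l + (ns (l + 1) - ns l - 1) + 1 = ns (l + 1) := by omega
    show B.castV _ (B.tgt (x.1 (ns l + (ns (l + 1) - ns l - 1)))) = B.src (x.1 (ns (l + 1) + 0))
    rw [x.2 (ns l + (ns (l + 1) - ns l - 1))]
    exact B.castV_eq_of_heq _ (by rw [hm]; exact HEq.rfl)⟩


/-- Level `n+1` is uniformly ordered: there is a single nonempty block `P` of paths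
from the root to level `n` such that the `n`-basic block at every vertex at level
`n+1` is a positive power of `P`. -/
def UniformlyOrderedLevel (n : ℕ) : Prop :=
  ∃ (p : ℕ) (hp : 0 < p) (P : Fin p → B.FinPath n),
    ∀ v : B.V (n + 1), ∃ (m : ℕ), 0 < m ∧
      ∃ enum : Fin (m * p) ≃ { q : B.FinPath (n + 1) // B.EndsAt q v },
        (∀ i j : Fin (m * p), i < j ↔ B.finLT (enum i).1 (enum j).1) ∧
        (∀ i : Fin (m * p),
          B.truncTo n (Nat.le_succ n) (enum i).1 = P ⟨i.val % p, Nat.mod_lt _ hp⟩)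

/-- The ordinal label of an edge: its position in the linear order on the edges
into its target. -/
noncomputable def edgeLabel {n : ℕ} (e : B.E n) : ℕ := Nat.card { e' : B.E n // B.elt e' e }

/-- Deterministic: for every `n ≥ 1`, distinct edges with the same source at level
`n` have different ordinal labels. -/
def Deterministic : Prop :=
  ∀ n : ℕ, 1 ≤ n → ∀ e f : B.E n, B.src e = B.src f → e ≠ f →
    B.edgeLabel e ≠ B.edgeLabel f

end BDiagram

/-- A Bratteli–Vershik system: a simple, properly ordered ordered Bratteli diagram
together with its Vershik map. -/
structure BVSystem where
  B : BDiagram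
  T : B.PathSpace ≃ B.PathSpace
  proper : B.ProperlyOrdered
  simple : B.Simple
  vershik : B.IsVershik T

/-- Conjugacy of systems: an equivariant homeomorphism of the path spaces taking
minimal paths to minimal paths. -/
def Conjugate (S S' : BVSystem) : Prop :=
  ∃ φ : S.B.PathSpace ≃ S'.B.PathSpace,
    (@Continuous _ _ S.B.pathTop S'.B.pathTop φ) ∧
    (@Continuous _ _ S'.B.pathTop S.B.pathTop φ.symm) ∧
    (∀ x, φ (S.T x) = S'.T (φ x)) ∧
    (∀ x, S.B.IsMinPath x → S'.B.IsMinPath (φ x))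

/-- An odometer: a system whose diagram has exactly one vertex at every level. -/
def IsOdometer (S : BVSystem) : Prop := ∀ n, Subsingleton (S.B.V n)

/-!
The paths into a vertex form a finite linear order, so an order isomorphism between two such
sets is unique. Hence if `x, x'` are `k`-equivalent and differ at level `d`, while `y, y'` are
`k'`-equivalent with `k' > d`, then at a level `n` beyond `k, k', d` the pairs `x, x'` and
`y, y'` cannot pass through the same pair of vertices: the unique isomorphism matching `x`
with `x'` would preserve truncations to level `k'`, so `x` and `x'` would agree at level `d`.
Chaining `R² + 1` pairs, each differing above the depth of equivalence of the next, gives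
`R² + 1` distinct vertex pairs at one level, which therefore has more than `R` vertices.
-/

namespace BDiagram

variable {B : BDiagram}

theorem FinPath.exists_last_ne {n : ℕ} {p q : B.FinPath n} (hne : p ≠ q) :
    ∃ (N : ℕ) (hN : N < n), p.1 ⟨N, hN⟩ ≠ q.1 ⟨N, hN⟩ ∧
      ∀ (i : ℕ) (hi : i < n), N < i → p.1 ⟨i, hi⟩ = q.1 ⟨i, hi⟩ := by
  classical
  set S := Finset.univ.filter fun i : Fin n => p.1 i ≠ q.1 i
  have hS : S.Nonempty := by
    by_contra hempty
    refine hne (Subtype.ext (funext fun i => ?_))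
    by_contra hi
    exact hempty ⟨i, by simpa [S] using hi⟩
  obtain ⟨N, hNS, hmax⟩ := S.exists_max_image id hS
  refine ⟨N, N.2, by simpa [S] using hNS, fun i hi hNi => ?_⟩
  by_contra hne'
  exact absurd (hmax ⟨i, hi⟩ (by simpa [S] using hne')) (by simpa [Fin.le_def] using hNi)

theorem finLT_irrefl {n : ℕ} (p : B.FinPath n) : ¬ B.finLT p p := by
  rintro ⟨_, _, hlt, -⟩
  exact B.elt_irrefl _ _ hlt

theorem finLT_trans {n : ℕ} {p q r : B.FinPath n} (hpq : B.finLT p q) (hqr : B.finLT q r) :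
    B.finLT p r := by
  obtain ⟨N₁, hN₁, hlt₁, hgt₁⟩ := hpq
  obtain ⟨N₂, hN₂, hlt₂, hgt₂⟩ := hqr
  rcases lt_trichotomy N₁ N₂ with hc | rfl | hc
  · exact ⟨N₂, hN₂, by rwa [hgt₁ N₂ hN₂ hc],
      fun i hi hN => (hgt₁ i hi (by omega)).trans (hgt₂ i hi hN)⟩
  · exact ⟨N₁, hN₁, B.elt_trans _ _ _ _ hlt₁ hlt₂,
      fun i hi hN => (hgt₁ i hi hN).trans (hgt₂ i hi hN)⟩
  · exact ⟨N₁, hN₁, by rwa [← hgt₂ N₁ hN₁ hc],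
      fun i hi hN => (hgt₁ i hi hN).trans (hgt₂ i hi (by omega))⟩

/-- Two distinct paths into the same vertex are comparable: at their last disagreement the
two edges have the same target, because either the next edges agree or both end at `v`. -/
theorem finLT_total_of_endsAt {n : ℕ} {v : B.V n} {p q : B.FinPath n}
    (hp : B.EndsAt p v) (hq : B.EndsAt q v) (hne : p ≠ q) : B.finLT p q ∨ B.finLT q p := by
  obtain ⟨N, hN, hNne, hafter⟩ := FinPath.exists_last_ne hne
  have htgt : B.tgt (p.1 ⟨N, hN⟩) = B.tgt (q.1 ⟨N, hN⟩) := by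
    rcases Nat.lt_or_ge (N + 1) n with hlt | hge
    · rw [p.2 N hlt, q.2 N hlt, hafter (N + 1) hlt (Nat.lt_succ_self N)]
    · have hn : n = N + 1 := by omega
      rw [hp N hn, hq N hn]
  exact (B.elt_total _ _ _ htgt hNne).imp (fun h => ⟨N, hN, h, hafter⟩)
    fun h => ⟨N, hN, h, fun i hi hNi => (hafter i hi hNi).symm⟩

abbrev Fiber {n : ℕ} (v : B.V n) : Type := { p : B.FinPath n // B.EndsAt p v }

def fiberLT {n : ℕ} (v : B.V n) (p q : Fiber v) : Prop := B.finLT p.1 q.1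

instance {n : ℕ} (v : B.V n) : IsTrans (Fiber v) (B.fiberLT v) :=
  ⟨fun _ _ _ => finLT_trans⟩

instance {n : ℕ} (v : B.V n) : Std.Irrefl (B.fiberLT v) :=
  ⟨fun p => finLT_irrefl p.1⟩

instance {n : ℕ} (v : B.V n) : Std.Trichotomous (B.fiberLT v) :=
  ⟨fun p q hpq hqp => by
    by_contra hne
    exact (finLT_total_of_endsAt p.2 q.2 (hne <| Subtype.ext ·)).elim hpq hqp⟩

instance (n : ℕ) : Finite (B.FinPath n) := by
  have := B.fintE
  unfold FinPath
  infer_instance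

instance {n : ℕ} (v : B.V n) : IsWellFounded (Fiber v) (B.fiberLT v) :=
  ⟨Finite.wellFounded_of_trans_of_irrefl _⟩

theorem fiber_equiv_eq_of_finLT_iff {n : ℕ} {v w : B.V n} (φ ψ : Fiber v ≃ Fiber w)
    (hφ : ∀ p q, B.finLT p.1 q.1 ↔ B.finLT (φ p).1 (φ q).1)
    (hψ : ∀ p q, B.finLT p.1 q.1 ↔ B.finLT (ψ p).1 (ψ q).1) : φ = ψ := by
  let φr : B.fiberLT v ≃r B.fiberLT w := ⟨φ, (hφ _ _).symm⟩
  let ψr : B.fiberLT v ≃r B.fiberLT w := ⟨ψ, (hψ _ _).symm⟩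
  exact Equiv.ext fun p => DFunLike.congr_fun (Subsingleton.elim φr.toInitialSeg ψr.toInitialSeg) p

theorem KEquivAt.pathVert_pair_ne {k k' n d : ℕ} {x x' y y' : B.PathSpace}
    (hx : B.KEquivAt k n x x') (hy : B.KEquivAt k' n y y') (hd : x.1 d ≠ x'.1 d)
    (hdk' : d < k') (hdn : d < n) :
    (B.pathVert x n, B.pathVert x' n) ≠ (B.pathVert y n, B.pathVert y' n) := by
  intro hv
  obtain ⟨hv, hv'⟩ := Prod.mk.inj hv
  obtain ⟨φ, hφ, -, hφx⟩ := hx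
  obtain ⟨ψ, hψ, hψk'⟩ : ∃ ψ : Fiber (B.pathVert x n) ≃ Fiber (B.pathVert x' n),
      (∀ p q, B.finLT p.1 q.1 ↔ B.finLT (ψ p).1 (ψ q).1) ∧
      ∀ p (i : ℕ), i < k' → ∀ hin : i < n, ((ψ p).1).1 ⟨i, hin⟩ = (p.1).1 ⟨i, hin⟩ := by
    obtain ⟨ψ, hψ, hψk', -⟩ := hy
    rw [hv, hv']
    exact ⟨ψ, hψ, hψk'⟩
  obtain rfl := fiber_equiv_eq_of_finLT_iff φ ψ hφ hψ
  have hagree := hψk' ⟨B.pathInit x n, B.pathInit_endsAt x n⟩ d hdk' hdn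
  rw [hφx] at hagree
  exact hd hagree.symm

theorem SNE.exists_ne_at (hsne : B.SNE) (k : ℕ) :
    ∃ (x x' : B.PathSpace) (d : ℕ), k < d ∧ x.1 d ≠ x'.1 d ∧ B.KEquivPaths (k + 1) x x' := by
  obtain ⟨x, x', hne, hequiv⟩ := hsne (k + 1) (Nat.le_add_left 1 k)
  obtain ⟨d, hd⟩ : ∃ d, x.1 d ≠ x'.1 d := by
    by_contra! h
    exact hne (Subtype.ext (funext h))
  refine ⟨x, x', d, ?_, hd, hequiv⟩
  by_contra! hdk
  exact hd (hequiv.1 d (by omega))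

end BDiagram

theorem lt_natCard_of_injective_prod_self {α : Type*} [Finite α] {R : ℕ}
    {f : Fin (R * R + 1) → α × α} (hf : Function.Injective f) : R < Nat.card α := by
  have hcard := Nat.card_le_card_of_injective f hf
  rw [Nat.card_fin, Nat.card_prod] at hcard
  by_contra! hR
  have := Nat.mul_self_le_mul_self hR
  omega

theorem sne_unbounded_width_general
    (B : BDiagram)
    (hsne : B.SNE) :
    ∀ R : ℕ, ∃ n : ℕ, R < Nat.card (B.V n) := by
  intro R
  choose x x' d hkd hd hequiv using hsne.exists_ne_at
  -- the `j`-th pair is `(κ j + 1)`-equivalent and differs at level `κ (j + 1)`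
  set κ : ℕ → ℕ := fun j => d^[j] 0
  have hκ_succ (j : ℕ) : κ (j + 1) = d (κ j) := Function.iterate_succ_apply' d j 0
  have hκ : StrictMono κ := strictMono_nat_of_lt_succ fun j => hκ_succ j ▸ hkd (κ j)
  set n := κ (R * R + 1) + 1
  have : Fintype (B.V n) := B.fintV n
  refine ⟨n, lt_natCard_of_injective_prod_self (f := fun j : Fin (R * R + 1) =>
    (B.pathVert (x (κ j)) n, B.pathVert (x' (κ j)) n)) ?_⟩
  refine Function.Injective.of_lt_imp_ne fun i j hij => ?_
  have hi : (i : ℕ) + 1 ≤ j := hij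
  refine ((hequiv (κ i)).2 n (Nat.succ_lt_succ (hκ i.2))).pathVert_pair_ne
    ((hequiv (κ j)).2 n (Nat.succ_lt_succ (hκ j.2))) (hd (κ i)) ?_ ?_
  · rw [← hκ_succ]
    exact Nat.lt_succ_of_le (hκ.monotone hi)
  · rw [← hκ_succ]
    exact Nat.lt_succ_of_le (hκ.monotone (by omega))

/-- Every standard nonexpansive simple, properly ordered
Bratteli–Vershik system has unbounded width: for every `R` some level has more
than `R` vertices. -/
theorem sne_unbounded_width
    (B : BDiagram) (T : B.PathSpace ≃ B.PathSpace)
    (hproper : B.ProperlyOrdered) (hsimple : B.Simple) (hT : B.IsVershik T)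
    (hsne : B.SNE) :
    ∀ R : ℕ, ∃ n : ℕ, R < Nat.card (B.V n) :=
  sne_unbounded_width_general B hsne
end

section
/- Let (X,T) be a simple, properly ordered Bratteli-Vershik system and let (X',T') be its telescoping to levels 0 = n_0 < n_1 < n_2 < .... Let x, y be a depth k pair of paths in X. If k < n_1, then the image paths of x and y in X' have different 1-codings. If k >= n_1 and l is the unique index with n_l <= k < n_{l+1}, then the images of x and y under the telescoping form a depth l pair in X'. In particular, the depth of the image pair tends to infinity as k tends to infinity. -/
set_option autoImplicit false

/-!
Cutting a path of `B` into the blocks of levels `[ns l, ns (l + 1))` is a bijection onto the path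
space of the telescope which preserves the order on cofinal paths. A Vershik map is determined by
that order together with the unique minimal path, so this bijection conjugates `T` with `T'`.
Hence the images of `x` and `y` have the same `l`-coding exactly when `x` and `y` have the same
`ns l`-coding, and a depth `k` pair with `ns l ≤ k < ns (l + 1)` has the same `ns l`-coding but
not the same `ns (l + 1)`-coding.
-/

namespace BDiagram

section VershikMap

variable {D : BDiagram}

theorem pathLT_or_pathLT_of_eventuallyEq {u v : D.PathSpace} (hne : u ≠ v) {M : ℕ}
    (hM : ∀ n, M ≤ n → u.1 n = v.1 n) : D.pathLT u v ∨ D.pathLT v u := by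
  classical
  obtain ⟨n₀, hn₀⟩ : ∃ n, u.1 n ≠ v.1 n := by
    by_contra! h
    exact hne (Subtype.ext (funext h))
  have hn₀M : n₀ ≤ M := by
    by_contra! h
    exact hn₀ (hM n₀ h.le)
  set N := Nat.findGreatest (fun n => u.1 n ≠ v.1 n) M
  have hN : u.1 N ≠ v.1 N := Nat.findGreatest_spec (P := fun n => u.1 n ≠ v.1 n) hn₀M hn₀
  have hafter : ∀ n, N < n → u.1 n = v.1 n := by
    intro n hn
    by_contra hne'
    have hnM : n ≤ M := by
      by_contra! h
      exact hne' (hM n h.le)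
    exact Nat.findGreatest_is_greatest hn hnM hne'
  have htgt : D.tgt (u.1 N) = D.tgt (v.1 N) := by
    rw [u.2 N, v.2 N, hafter (N + 1) N.lt_succ_self]
  rcases D.elt_total N _ _ htgt hN with h | h
  · exact Or.inl ⟨N, h, hafter⟩
  · exact Or.inr ⟨N, h, fun n hn => (hafter n hn).symm⟩

theorem not_isMaxPath_of_pathLT {x y : D.PathSpace} (h : D.pathLT x y) : ¬ D.IsMaxPath x :=
  fun hx => let ⟨N, hN, _⟩ := h; hx N _ hN

theorem not_isMinPath_of_pathLT {x y : D.PathSpace} (h : D.pathLT x y) : ¬ D.IsMinPath y :=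
  fun hy => let ⟨N, hN, _⟩ := h; hy N _ hN

namespace IsVershik

variable {S : D.PathSpace ≃ D.PathSpace}

theorem not_isMaxPath_iff (hS : D.IsVershik S) {x : D.PathSpace} :
    ¬ D.IsMaxPath x ↔ ∃ y, D.pathLT x y :=
  ⟨fun hx => ⟨S x, (hS.1 x hx).1⟩, fun ⟨_, h⟩ => not_isMaxPath_of_pathLT h⟩

theorem not_isMinPath_iff (hS : D.IsVershik S) {y : D.PathSpace} :
    ¬ D.IsMinPath y ↔ ∃ x, D.pathLT x y := by
  refine ⟨fun hy => ⟨S.symm y, ?_⟩, fun ⟨_, h⟩ => not_isMinPath_of_pathLT h⟩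
  have hmax : ¬ D.IsMaxPath (S.symm y) := fun h => hy (by simpa using hS.2 _ h)
  simpa using (hS.1 _ hmax).1

theorem eq_of_isSucc (hS : D.IsVershik S) {x s : D.PathSpace} (hx : ¬ D.IsMaxPath x)
    (hlt : D.pathLT x s) (hleast : ∀ z, D.pathLT x z → ¬ D.pathLT z s) : s = S x := by
  obtain ⟨hltS, hleastS⟩ := hS.1 x hx
  by_contra hne
  obtain ⟨N, -, ha⟩ := id hlt
  obtain ⟨N', -, ha'⟩ := id hltS
  rcases pathLT_or_pathLT_of_eventuallyEq hne (M := max N N' + 1)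
      (fun n hn => (ha n (by omega)).symm.trans (ha' n (by omega))) with h | h
  · exact hleastS s hlt h
  · exact hleast (S x) hltS h

variable {D' : BDiagram} {S' : D'.PathSpace ≃ D'.PathSpace} {φ : D.PathSpace ≃ D'.PathSpace}

theorem isMaxPath_map_iff (hS : D.IsVershik S) (hS' : D'.IsVershik S')
    (hφ : ∀ x y, D'.pathLT (φ x) (φ y) ↔ D.pathLT x y) (x : D.PathSpace) :
    D'.IsMaxPath (φ x) ↔ D.IsMaxPath x := by
  rw [← not_iff_not, hS'.not_isMaxPath_iff, hS.not_isMaxPath_iff, φ.surjective.exists]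
  simp only [hφ]

theorem isMinPath_map_iff (hS : D.IsVershik S) (hS' : D'.IsVershik S')
    (hφ : ∀ x y, D'.pathLT (φ x) (φ y) ↔ D.pathLT x y) (y : D.PathSpace) :
    D'.IsMinPath (φ y) ↔ D.IsMinPath y := by
  rw [← not_iff_not, hS'.not_isMinPath_iff, hS.not_isMinPath_iff, φ.surjective.exists]
  simp only [hφ]

/-- The successor of a non-maximal path is determined by `pathLT`, and the image of a maximal
path is the unique minimal path; both are preserved by `φ`. -/
theorem apply_map_eq_map_apply (hS : D.IsVershik S) (hS' : D'.IsVershik S')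
    (hφ : ∀ x y, D'.pathLT (φ x) (φ y) ↔ D.pathLT x y)
    (hmin : {x | D.IsMinPath x}.Subsingleton) (x : D.PathSpace) : S' (φ x) = φ (S x) := by
  by_cases hx : D.IsMaxPath x
  · obtain ⟨w, hw⟩ := φ.surjective (S' (φ x))
    have hwmin : D.IsMinPath w := by
      rw [← isMinPath_map_iff hS hS' hφ, hw]
      exact hS'.2 _ ((isMaxPath_map_iff hS hS' hφ x).2 hx)
    rw [← hw, hmin hwmin (hS.2 x hx)]
  · have hφx : ¬ D'.IsMaxPath (φ x) := by rwa [isMaxPath_map_iff hS hS' hφ]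
    obtain ⟨hlt, hleast⟩ := hS.1 x hx
    refine (hS'.eq_of_isSucc hφx ((hφ _ _).2 hlt) fun z h₁ h₂ => ?_).symm
    obtain ⟨w, rfl⟩ := φ.surjective z
    exact hleast w ((hφ _ _).1 h₁) ((hφ _ _).1 h₂)

end IsVershik

theorem iterZ_map {D' : BDiagram} {S : D.PathSpace ≃ D.PathSpace}
    {S' : D'.PathSpace ≃ D'.PathSpace} {φ : D.PathSpace → D'.PathSpace}
    (h : ∀ x, S' (φ x) = φ (S x)) (m : ℤ) (x : D.PathSpace) :
    D'.iterZ S' m (φ x) = φ (D.iterZ S m x) := by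
  induction m using Int.induction_on generalizing x with
  | zero => rfl
  | succ m ih =>
    simp only [iterZ, zpow_add_one, Equiv.Perm.mul_apply] at ih ⊢
    rw [h, ih]
  | pred m ih =>
    have hinv : S'⁻¹ (φ x) = φ (S⁻¹ x) := by
      rw [Equiv.Perm.inv_eq_iff_eq, h, Equiv.Perm.coe_inv, Equiv.apply_symm_apply]
    simp only [iterZ, zpow_sub_one, Equiv.Perm.mul_apply] at ih ⊢
    rw [hinv, ih]

theorem SameCoding.mono {T : D.PathSpace ≃ D.PathSpace} {k k' : ℕ} {x y : D.PathSpace}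
    (hs : D.SameCoding T k' x y) (h : k ≤ k') : D.SameCoding T k x y :=
  fun m i hi => hs m i (by omega)

end VershikMap

section BlockIndex

variable {ns : ℕ → ℕ}

/-- The level `l` of the telescope whose block `[ns l, ns (l + 1))` of levels contains `n`. -/
def blockIndex (ns : ℕ → ℕ) (n : ℕ) : ℕ := Nat.findGreatest (fun l => ns l ≤ n) n

theorem ns_blockIndex_le (h0 : ns 0 = 0) (n : ℕ) : ns (blockIndex ns n) ≤ n :=
  Nat.findGreatest_spec (P := fun l => ns l ≤ n) (Nat.zero_le n) (by simp [h0])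

theorem lt_ns_blockIndex_succ (hmono : StrictMono ns) (n : ℕ) : n < ns (blockIndex ns n + 1) := by
  by_cases h : blockIndex ns n + 1 ≤ n
  · exact not_le.1 (Nat.findGreatest_is_greatest (P := fun l => ns l ≤ n) (Nat.lt_succ_self _) h)
  · have := hmono.le_apply (x := blockIndex ns n + 1)
    omega

theorem exists_ns_add_eq (hmono : StrictMono ns) (h0 : ns 0 = 0) (n : ℕ) :
    ∃ l i, i < ns (l + 1) - ns l ∧ ns l + i = n := by
  have := ns_blockIndex_le h0 n
  have := lt_ns_blockIndex_succ hmono n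
  exact ⟨blockIndex ns n, n - ns (blockIndex ns n), by omega, by omega⟩

theorem blockIndex_ns_add (hmono : StrictMono ns) (h0 : ns 0 = 0) {l i : ℕ}
    (hi : i < ns (l + 1) - ns l) : blockIndex ns (ns l + i) = l := by
  have h₁ := ns_blockIndex_le h0 (ns l + i)
  have h₂ := lt_ns_blockIndex_succ hmono (ns l + i)
  have : l < blockIndex ns (ns l + i) + 1 := hmono.lt_iff_lt.1 (by omega)
  have : blockIndex ns (ns l + i) < l + 1 := hmono.lt_iff_lt.1 (by omega)
  omega

end BlockIndex

section Telescope

variable (B : BDiagram) {ns : ℕ → ℕ} {hmono : StrictMono ns} {h0 : ns 0 = 0}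

theorem castV_tgt_eq_src_iff (f : ∀ n, B.E n) {a b : ℕ} (h : a + 1 = b) :
    B.castV h (B.tgt (f a)) = B.src (f b) ↔ B.tgt (f a) = B.src (f (a + 1)) := by
  subst h
  rfl

def fromTelFun (z : (B.Telescope ns hmono h0).PathSpace) (n : ℕ) : B.E n :=
  B.castE (show ns (blockIndex ns n) + (n - ns (blockIndex ns n)) = n by
      have := ns_blockIndex_le h0 n; omega)
    ((z.1 (blockIndex ns n)).1 ⟨n - ns (blockIndex ns n), by
      have := ns_blockIndex_le h0 n; have := lt_ns_blockIndex_succ hmono n; omega⟩)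

theorem fromTelFun_ns_add (z : (B.Telescope ns hmono h0).PathSpace) {l i : ℕ}
    (hi : i < ns (l + 1) - ns l) : B.fromTelFun z (ns l + i) = (z.1 l).1 ⟨i, hi⟩ := by
  have key : ∀ l' (_ : l' = l) i' (hi' : i' < ns (l' + 1) - ns l') (h : ns l' + i' = ns l + i),
      B.castE h ((z.1 l').1 ⟨i', hi'⟩) = (z.1 l).1 ⟨i, hi⟩ := by
    rintro l' rfl i' hi' h
    obtain rfl : i' = i := by omega
    rfl
  exact key _ (blockIndex_ns_add hmono h0 hi) _ _ _

theorem fromTelFun_chain (z : (B.Telescope ns hmono h0).PathSpace) (n : ℕ) :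
    B.tgt (B.fromTelFun z n) = B.src (B.fromTelFun z (n + 1)) := by
  obtain ⟨l, i, hi, rfl⟩ := exists_ns_add_eq hmono h0 n
  by_cases hlast : i + 1 < ns (l + 1) - ns l
  · change B.tgt _ = B.src (B.fromTelFun z (ns l + (i + 1)))
    rw [fromTelFun_ns_add B z hi, fromTelFun_ns_add B z hlast]
    exact (z.1 l).2 i hlast
  · obtain rfl : i = ns (l + 1) - ns l - 1 := by omega
    have hnext : 0 < ns (l + 1 + 1) - ns (l + 1) := by
      have := hmono (Nat.lt_add_one (l + 1))
      omega
    have hz : B.castV (show ns l + (ns (l + 1) - ns l - 1) + 1 = ns (l + 1) by omega) (B.tgt ((z.1 l).1 ⟨ns (l + 1) - ns l - 1, hi⟩)) =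
        B.src ((z.1 (l + 1)).1 ⟨0, hnext⟩) := z.2 l
    rw [← fromTelFun_ns_add B z hi, ← fromTelFun_ns_add B z hnext] at hz
    exact (B.castV_tgt_eq_src_iff _ _).1 hz

def fromTel (z : (B.Telescope ns hmono h0).PathSpace) : B.PathSpace :=
  ⟨B.fromTelFun z, B.fromTelFun_chain z⟩

theorem fromTel_teleMap (x : B.PathSpace) : B.fromTel (B.teleMap ns hmono h0 x) = x := by
  refine Subtype.ext (funext fun n => ?_)
  obtain ⟨l, i, hi, rfl⟩ := exists_ns_add_eq hmono h0 n
  exact B.fromTelFun_ns_add _ hi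

theorem teleMap_fromTel (z : (B.Telescope ns hmono h0).PathSpace) :
    B.teleMap ns hmono h0 (B.fromTel z) = z :=
  Subtype.ext (funext fun _ => Subtype.ext (funext fun i => B.fromTelFun_ns_add z i.isLt))

def teleEquiv (ns : ℕ → ℕ) (hmono : StrictMono ns) (h0 : ns 0 = 0) :
    B.PathSpace ≃ (B.Telescope ns hmono h0).PathSpace where
  toFun := B.teleMap ns hmono h0
  invFun := B.fromTel
  left_inv := B.fromTel_teleMap
  right_inv := B.teleMap_fromTel

theorem teleMap_block_eq_iff {x y : B.PathSpace} {l : ℕ} :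
    (B.teleMap ns hmono h0 x).1 l = (B.teleMap ns hmono h0 y).1 l ↔
      ∀ n, ns l ≤ n → n < ns (l + 1) → x.1 n = y.1 n := by
  refine ⟨fun h n h₁ h₂ => ?_, fun h => Subtype.ext (funext fun i => h _ le_self_add ?_)⟩
  · obtain ⟨i, rfl⟩ := Nat.exists_eq_add_of_le h₁
    exact congrArg (fun e => e.1 ⟨i, by omega⟩) h
  · have := i.isLt
    omega

theorem teleMap_pathLT_iff {x y : B.PathSpace} :
    (B.Telescope ns hmono h0).pathLT (B.teleMap ns hmono h0 x) (B.teleMap ns hmono h0 y) ↔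
      B.pathLT x y := by
  constructor
  · rintro ⟨L, ⟨N, hN, helt, habove⟩, hafter⟩
    refine ⟨ns L + N, helt, fun n hn => ?_⟩
    obtain ⟨l, i, hi, rfl⟩ := exists_ns_add_eq hmono h0 n
    rcases lt_or_ge L l with hL | hL
    · exact (B.teleMap_block_eq_iff.1 (hafter l hL)) _ le_self_add (by omega)
    · have hl : l = L := by
        have : L < l + 1 := hmono.lt_iff_lt.1 (by omega)
        omega
      subst hl
      exact habove i hi (by omega)
  · rintro ⟨N, helt, hafter⟩
    obtain ⟨L, i, hi, rfl⟩ := exists_ns_add_eq hmono h0 N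
    refine ⟨L, ⟨i, hi, helt, fun j _ hij => hafter _ (Nat.add_lt_add_left hij _)⟩, fun l hl => ?_⟩
    have : ns (L + 1) ≤ ns l := hmono.monotone hl
    exact B.teleMap_block_eq_iff.2 fun n h₁ _ => hafter n (by omega)

theorem teleMap_prefix_eq_iff {x y : B.PathSpace} {l : ℕ} :
    (∀ j < l, (B.teleMap ns hmono h0 x).1 j = (B.teleMap ns hmono h0 y).1 j) ↔
      ∀ n < ns l, x.1 n = y.1 n := by
  constructor
  · intro h n hn
    obtain ⟨j, i, hi, rfl⟩ := exists_ns_add_eq hmono h0 n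
    have hj : j < l := hmono.lt_iff_lt.1 (by omega)
    exact congrArg (fun e => e.1 ⟨i, hi⟩) (h j hj)
  · intro h j hj
    have : ns (j + 1) ≤ ns l := hmono.monotone hj
    exact B.teleMap_block_eq_iff.2 fun n _ h₂ => h n (by omega)

theorem teleMap_sameCoding_iff {T : B.PathSpace ≃ B.PathSpace}
    {T' : (B.Telescope ns hmono h0).PathSpace ≃ (B.Telescope ns hmono h0).PathSpace}
    (hT : B.IsVershik T) (hT' : (B.Telescope ns hmono h0).IsVershik T')
    (hmin : {x | B.IsMinPath x}.Subsingleton) (l : ℕ) (x y : B.PathSpace) :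
    (B.Telescope ns hmono h0).SameCoding T' l (B.teleMap ns hmono h0 x)
        (B.teleMap ns hmono h0 y) ↔ B.SameCoding T (ns l) x y := by
  have hconj : ∀ x, T' (B.teleMap ns hmono h0 x) = B.teleMap ns hmono h0 (T x) :=
    hT.apply_map_eq_map_apply (φ := B.teleEquiv ns hmono h0) hT' (fun _ _ => B.teleMap_pathLT_iff) hmin
  refine forall_congr' fun m => ?_
  rw [iterZ_map hconj, iterZ_map hconj]
  exact B.teleMap_prefix_eq_iff

end Telescope

end BDiagram

theorem depth_pair_telescoping_general
    (B : BDiagram) (T : B.PathSpace ≃ B.PathSpace)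
    (hproper : B.ProperlyOrdered) (hT : B.IsVershik T)
    (ns : ℕ → ℕ) (hmono : StrictMono ns) (h0 : ns 0 = 0)
    (T' : (B.Telescope ns hmono h0).PathSpace ≃ (B.Telescope ns hmono h0).PathSpace)
    (hT' : (B.Telescope ns hmono h0).IsVershik T')
    (k : ℕ) (x y : B.PathSpace) (hxy : B.DepthPair T k x y) :
    (k < ns 1 →
      ¬ (B.Telescope ns hmono h0).SameCoding T' 1
          (B.teleMap ns hmono h0 x) (B.teleMap ns hmono h0 y)) ∧
    (∀ l : ℕ, ns l ≤ k → k < ns (l + 1) →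
      (B.Telescope ns hmono h0).DepthPair T' l
        (B.teleMap ns hmono h0 x) (B.teleMap ns hmono h0 y)) ∧
    (∀ M : ℕ, ∃ K : ℕ, ∀ k' l : ℕ, K ≤ k' → ns l ≤ k' → k' < ns (l + 1) → M ≤ l) := by
  have hcoding (l : ℕ) := B.teleMap_sameCoding_iff hT hT'
    (fun _ ha _ hb => hproper.1.unique ha hb) l x y
  obtain ⟨hne, hk, hk1⟩ := hxy
  refine ⟨fun hk' h => hk1 (((hcoding 1).1 h).mono hk'), fun l hl hl' => ⟨?_, ?_, ?_⟩,
    fun M => ⟨ns M, fun k' l hK _ hl' => ?_⟩⟩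
  · exact (B.teleEquiv ns hmono h0).injective.ne hne
  · exact (hcoding l).2 (hk.mono hl)
  · exact fun h => hk1 (((hcoding (l + 1)).1 h).mono hl')
  · exact Nat.lt_add_one_iff.1 (hmono.lt_iff_lt.1 (by omega))

/-- Telescoping a simple, properly ordered Bratteli–Vershik
system to levels `0 = ns 0 < ns 1 < ⋯`: if `x, y` is a depth `k` pair, then if
`k < ns 1` the image paths have different `1`-codings, and if `ns l ≤ k < ns (l+1)`
the image pair is depth `l`; moreover the index `l` tends to infinity with `k`. -/
theorem depth_pair_telescoping
    (B : BDiagram) (T : B.PathSpace ≃ B.PathSpace)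
    (hproper : B.ProperlyOrdered) (hsimple : B.Simple) (hT : B.IsVershik T)
    (ns : ℕ → ℕ) (hmono : StrictMono ns) (h0 : ns 0 = 0)
    (T' : (B.Telescope ns hmono h0).PathSpace ≃ (B.Telescope ns hmono h0).PathSpace)
    (hT' : (B.Telescope ns hmono h0).IsVershik T')
    (k : ℕ) (x y : B.PathSpace) (hxy : B.DepthPair T k x y) :
    (k < ns 1 →
      ¬ (B.Telescope ns hmono h0).SameCoding T' 1
          (B.teleMap ns hmono h0 x) (B.teleMap ns hmono h0 y)) ∧
    (∀ l : ℕ, ns l ≤ k → k < ns (l + 1) →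
      (B.Telescope ns hmono h0).DepthPair T' l
        (B.teleMap ns hmono h0 x) (B.teleMap ns hmono h0 y)) ∧
    (∀ M : ℕ, ∃ K : ℕ, ∀ k' l : ℕ, K ≤ k' → ns l ≤ k' → k' < ns (l + 1) → M ≤ l) :=
  depth_pair_telescoping_general B T hproper hT ns hmono h0 T' hT' k x y hxy
end

section
/- Let (X,T) be a simple, properly ordered Bratteli-Vershik system and let (X',T') be its telescoping to levels 0 = n_0 < n_1 < n_2 < .... Suppose x, y is a depth k pair of paths in X that has a j cut, where j >= n_1, and let l be the unique index with n_l <= j < n_{l+1}. Then the image pair of x, y under the telescoping has an l cut in X'. -/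
set_option autoImplicit false

/-!
Telescoping conjugates the Vershik maps. On each cofinality class `teleMap` is an order
isomorphism onto the cofinality class of the image (it is onto because a telescoped path can be
cut back into the edges of `B`), so it carries the successor of a non-maximal path to the
successor of its image. The telescope has a unique maximal path: if `teleMap z` is maximal then
so is `z`, for otherwise `teleMap z < teleMap (T z)`. As `T` and `T'` both send maximal paths to
minimal ones, the conjugacy also holds at the maximal path of `B`. Finally, the edge of the
telescope from level `ns i` to `ns (i + 1)` is minimal once all the edges it is made of are, and
for `i < l` these lie below `ns l ≤ j`.
-/

theorem Function.Semiconj.perm_zpow {α β : Type*} {φ : α → β} {T : Equiv.Perm α}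
    {T' : Equiv.Perm β} (h : Function.Semiconj φ T T') :
    ∀ m : ℤ, Function.Semiconj φ ⇑(T ^ m) ⇑(T' ^ m)
  | (n : ℕ) => by simpa only [zpow_natCast, Equiv.Perm.coe_pow] using h.iterate_right n
  | .negSucc n => by
    have hpow := h.iterate_right (n + 1)
    rw [← Equiv.Perm.coe_pow, ← Equiv.Perm.coe_pow] at hpow
    rw [zpow_negSucc, zpow_negSucc]
    exact hpow.inverses_right (T ^ (n + 1)).apply_symm_apply (T' ^ (n + 1)).symm_apply_apply

namespace StrictMono

variable {ns : ℕ → ℕ}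

theorem exists_le_and_lt_succ (hmono : StrictMono ns) (h0 : ns 0 = 0) (n : ℕ) :
    ∃ L, ns L ≤ n ∧ n < ns (L + 1) := by
  classical
  have hex : ∃ L, n < ns (L + 1) := ⟨n, (Nat.lt_succ_self n).trans_le (hmono.id_le _)⟩
  refine ⟨Nat.find hex, ?_, Nat.find_spec hex⟩
  rcases h : Nat.find hex with _ | L
  · simp [h0]
  · exact not_lt.1 (Nat.find_min hex (by omega))

theorem eq_of_le_of_lt_succ (hmono : StrictMono ns) {L L' n : ℕ} (h₁ : ns L ≤ n)
    (h₂ : n < ns (L + 1)) (h₁' : ns L' ≤ n) (h₂' : n < ns (L' + 1)) : L = L' := by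
  have := hmono.lt_iff_lt.1 (h₁.trans_lt h₂')
  have := hmono.lt_iff_lt.1 (h₁'.trans_lt h₂)
  omega

noncomputable def blockIndex (hmono : StrictMono ns) (h0 : ns 0 = 0) (n : ℕ) : ℕ :=
  (hmono.exists_le_and_lt_succ h0 n).choose

theorem blockIndex_le (hmono : StrictMono ns) (h0 : ns 0 = 0) (n : ℕ) :
    ns (hmono.blockIndex h0 n) ≤ n :=
  (hmono.exists_le_and_lt_succ h0 n).choose_spec.1

theorem lt_blockIndex_succ (hmono : StrictMono ns) (h0 : ns 0 = 0) (n : ℕ) :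
    n < ns (hmono.blockIndex h0 n + 1) :=
  (hmono.exists_le_and_lt_succ h0 n).choose_spec.2

theorem blockIndex_eq (hmono : StrictMono ns) (h0 : ns 0 = 0) {L n : ℕ} (h₁ : ns L ≤ n)
    (h₂ : n < ns (L + 1)) : hmono.blockIndex h0 n = L :=
  hmono.eq_of_le_of_lt_succ (hmono.blockIndex_le h0 n) (hmono.lt_blockIndex_succ h0 n) h₁ h₂

end StrictMono

namespace BDiagram

variable {B : BDiagram} {ns : ℕ → ℕ} {hmono : StrictMono ns} {h0 : ns 0 = 0}
  {T : B.PathSpace ≃ B.PathSpace}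

theorem castE_heq {m n : ℕ} (h : m = n) (e : B.E m) : HEq (B.castE h e) e := by
  subst h; rfl

theorem tgt_eq_src_of_heq {m m' n : ℕ} {e : B.E m} {e' : B.E m'} {f : B.E n}
    {f' : B.E (n + 1)} (hm : m = n) (hm' : m' = n + 1) (hf : HEq f e) (hf' : HEq f' e')
    (h : HEq (B.tgt e) (B.src e')) : B.tgt f = B.src f' := by
  subst hm hm'
  rw [eq_of_heq hf, eq_of_heq hf']
  exact eq_of_heq h

theorem not_isMaxPath_of_pathLT_s6 {u v : B.PathSpace} (h : B.pathLT u v) : ¬ B.IsMaxPath u :=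
  fun hu => let ⟨N, hN, _⟩ := h; hu N _ hN

theorem not_isMinPath_of_pathLT_s6 {u v : B.PathSpace} (h : B.pathLT u v) : ¬ B.IsMinPath v :=
  fun hv => let ⟨N, hN, _⟩ := h; hv N _ hN

theorem pathLT_or_pathLT_of_ne_of_eq_above {u v : B.PathSpace} {N : ℕ} (hN : u.1 N ≠ v.1 N)
    (habove : ∀ n, N < n → u.1 n = v.1 n) : B.pathLT u v ∨ B.pathLT v u := by
  have htgt : B.tgt (u.1 N) = B.tgt (v.1 N) := by
    rw [u.2, v.2, habove (N + 1) N.lt_succ_self]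
  exact (B.elt_total N _ _ htgt hN).imp (fun h => ⟨N, h, habove⟩)
    (fun h => ⟨N, h, fun n hn => (habove n hn).symm⟩)

theorem pathLT_or_pathLT_of_ne {u v : B.PathSpace} (hne : u ≠ v) (N : ℕ)
    (habove : ∀ n, N < n → u.1 n = v.1 n) : B.pathLT u v ∨ B.pathLT v u := by
  induction N with
  | zero =>
    refine pathLT_or_pathLT_of_ne_of_eq_above
      (fun h => hne (Subtype.ext (funext fun n => ?_))) habove
    rcases n.eq_zero_or_pos with rfl | hn
    exacts [h, habove n hn]
  | succ N ih =>
    by_cases h : u.1 (N + 1) = v.1 (N + 1)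
    · refine ih fun n hn => ?_
      rcases (Nat.succ_le_of_lt hn).eq_or_lt with rfl | hn
      exacts [h, habove n hn]
    · exact pathLT_or_pathLT_of_ne_of_eq_above h habove

theorem IsVershik.apply_eq_of_covBy (hT : B.IsVershik T)
    {x w : B.PathSpace} (hx : ¬ B.IsMaxPath x) (hxw : B.pathLT x w)
    (hgap : ∀ z, B.pathLT x z → ¬ B.pathLT z w) : T x = w := by
  obtain ⟨hxT, hTgap⟩ := hT.1 x hx
  by_contra hne
  obtain ⟨N₁, -, h₁⟩ := id hxT
  obtain ⟨N₂, -, h₂⟩ := id hxw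
  rcases pathLT_or_pathLT_of_ne hne (max N₁ N₂)
    (fun n hn => (h₁ n (by omega)).symm.trans (h₂ n (by omega))) with h | h
  exacts [hgap _ hxT h, hTgap _ hxw h]

theorem IsVershik.isMaxPath_symm_apply (hT : B.IsVershik T)
    {z : B.PathSpace} (hz : B.IsMinPath z) : B.IsMaxPath (T.symm z) := by
  by_contra h
  have := (hT.1 _ h).1
  rw [Equiv.apply_symm_apply] at this
  exact not_isMinPath_of_pathLT_s6 this hz

theorem isMinEdge_telescope {l : ℕ} {f : (B.Telescope ns hmono h0).E l}
    (hf : ∀ i, B.IsMinEdge (f.1 i)) : (B.Telescope ns hmono h0).IsMinEdge f :=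
  fun _ ⟨N, hN, helt, _⟩ => hf ⟨N, hN⟩ _ helt

theorem isMaxEdge_telescope {l : ℕ} {f : (B.Telescope ns hmono h0).E l}
    (hf : ∀ i, B.IsMaxEdge (f.1 i)) : (B.Telescope ns hmono h0).IsMaxEdge f :=
  fun _ ⟨N, hN, helt, _⟩ => hf ⟨N, hN⟩ _ helt

theorem isMinPath_teleMap {z : B.PathSpace} (hz : B.IsMinPath z) :
    (B.Telescope ns hmono h0).IsMinPath (B.teleMap ns hmono h0 z) :=
  fun _ => isMinEdge_telescope fun _ => hz _

theorem isMaxPath_teleMap {z : B.PathSpace} (hz : B.IsMaxPath z) :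
    (B.Telescope ns hmono h0).IsMaxPath (B.teleMap ns hmono h0 z) :=
  fun _ => isMaxEdge_telescope fun _ => hz _

theorem pathLT_teleMap {u v : B.PathSpace} (h : B.pathLT u v) :
    (B.Telescope ns hmono h0).pathLT (B.teleMap ns hmono h0 u) (B.teleMap ns hmono h0 v) := by
  obtain ⟨N, helt, habove⟩ := h
  obtain ⟨L, h₁, h₂⟩ := hmono.exists_le_and_lt_succ h0 N
  obtain ⟨d, rfl⟩ := Nat.exists_eq_add_of_le h₁
  refine ⟨L, ⟨d, by omega, helt, fun i _ hi => habove (ns L + i) (by omega)⟩, fun M hM => ?_⟩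
  have := hmono.monotone (show L + 1 ≤ M from hM)
  exact Subtype.ext (funext fun i => habove _ (by have := i.isLt; omega))

theorem pathLT_of_pathLT_teleMap {u v : B.PathSpace}
    (h : (B.Telescope ns hmono h0).pathLT (B.teleMap ns hmono h0 u)
      (B.teleMap ns hmono h0 v)) : B.pathLT u v := by
  obtain ⟨L, ⟨d, hd, helt, hwithin⟩, habove⟩ := h
  refine ⟨ns L + d, helt, fun n hn => ?_⟩
  obtain ⟨M, h₁, h₂⟩ := hmono.exists_le_and_lt_succ h0 n
  obtain ⟨i, rfl⟩ := Nat.exists_eq_add_of_le h₁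
  rcases lt_trichotomy M L with hML | rfl | hLM
  · have := hmono.monotone (by omega : M + 1 ≤ L)
    omega
  · exact hwithin i (by omega) (by omega)
  · exact congrArg (fun f : B.TelE _ _ => f.1 ⟨i, by omega⟩) (habove M hLM)

noncomputable def untelEdge (z' : (B.Telescope ns hmono h0).PathSpace) (n : ℕ) : B.E n :=
  B.castE (Nat.add_sub_cancel' (hmono.blockIndex_le h0 n))
    ((z'.1 (hmono.blockIndex h0 n)).1 ⟨n - ns (hmono.blockIndex h0 n), by
      have := hmono.blockIndex_le h0 n
      have := hmono.lt_blockIndex_succ h0 n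
      omega⟩)

theorem untelEdge_heq (z' : (B.Telescope ns hmono h0).PathSpace) {n L i : ℕ}
    (hn : n = ns L + i) (hi : i < ns (L + 1) - ns L) :
    HEq (untelEdge z' n) ((z'.1 L).1 ⟨i, hi⟩) := by
  obtain rfl : hmono.blockIndex h0 n = L := hmono.blockIndex_eq h0 (by omega) (by omega)
  obtain rfl : i = n - ns (hmono.blockIndex h0 n) := by omega
  exact castE_heq _ _

theorem untelEdge_chain (z' : (B.Telescope ns hmono h0).PathSpace) (n : ℕ) :
    B.tgt (untelEdge z' n) = B.src (untelEdge z' (n + 1)) := by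
  obtain ⟨L, h₁, h₂⟩ := hmono.exists_le_and_lt_succ h0 n
  obtain ⟨i, rfl⟩ := Nat.exists_eq_add_of_le h₁
  by_cases hlast : ns L + i + 1 < ns (L + 1)
  · exact tgt_eq_src_of_heq rfl rfl (untelEdge_heq z' rfl (by omega))
      (untelEdge_heq z' (i := i + 1) rfl (by omega)) (heq_of_eq ((z'.1 L).2 i (by omega)))
  · obtain rfl : i = ns (L + 1) - ns L - 1 := by omega
    have hnext : ns (L + 1) < ns (L + 1 + 1) := hmono (Nat.lt_succ_self _)
    exact tgt_eq_src_of_heq rfl (by omega : ns (L + 1) + 0 = _)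
      (untelEdge_heq z' rfl (by omega)) (untelEdge_heq z' (by omega) (by omega))
      ((castV_heq _ _ _).symm.trans (heq_of_eq (z'.2 L)))

theorem teleMap_surjective : Function.Surjective (B.teleMap ns hmono h0) := fun z' =>
  ⟨⟨untelEdge z', untelEdge_chain z'⟩,
    Subtype.ext (funext fun _ => Subtype.ext (funext fun i =>
      eq_of_heq (untelEdge_heq z' rfl i.isLt)))⟩

theorem isMaxPath_of_isMaxPath_teleMap (hT : B.IsVershik T) {z : B.PathSpace}
    (hz : (B.Telescope ns hmono h0).IsMaxPath (B.teleMap ns hmono h0 z)) : B.IsMaxPath z := by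
  by_contra h
  exact not_isMaxPath_of_pathLT_s6 (pathLT_teleMap (hT.1 z h).1) hz

theorem isMaxPath_telescope_unique (hmax : ∃! x, B.IsMaxPath x) (hT : B.IsVershik T)
    {z₁ z₂ : (B.Telescope ns hmono h0).PathSpace}
    (h₁ : (B.Telescope ns hmono h0).IsMaxPath z₁)
    (h₂ : (B.Telescope ns hmono h0).IsMaxPath z₂) : z₁ = z₂ := by
  obtain ⟨u₁, rfl⟩ := teleMap_surjective z₁
  obtain ⟨u₂, rfl⟩ := teleMap_surjective z₂
  rw [hmax.unique (isMaxPath_of_isMaxPath_teleMap hT h₁) (isMaxPath_of_isMaxPath_teleMap hT h₂)]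

theorem semiconj_teleMap (hmax : ∃! x, B.IsMaxPath x) (hT : B.IsVershik T)
    {T' : (B.Telescope ns hmono h0).PathSpace ≃ (B.Telescope ns hmono h0).PathSpace}
    (hT' : (B.Telescope ns hmono h0).IsVershik T') :
    Function.Semiconj (B.teleMap ns hmono h0) T T' := by
  intro z
  by_cases hz : B.IsMaxPath z
  · have hmin := isMinPath_teleMap (hmono := hmono) (h0 := h0) (hT.2 z hz)
    rw [← T'.apply_symm_apply (B.teleMap ns hmono h0 (T z)),
      isMaxPath_telescope_unique hmax hT (hT'.isMaxPath_symm_apply hmin) (isMaxPath_teleMap hz)]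
  · have hzTz := pathLT_teleMap (hmono := hmono) (h0 := h0) (hT.1 z hz).1
    refine (hT'.apply_eq_of_covBy (not_isMaxPath_of_pathLT_s6 hzTz) hzTz fun z₀ hlt hgt => ?_).symm
    obtain ⟨w, rfl⟩ := teleMap_surjective z₀
    exact (hT.1 z hz).2 w (pathLT_of_pathLT_teleMap hlt) (pathLT_of_pathLT_teleMap hgt)

theorem teleMap_iterZ (hmax : ∃! x, B.IsMaxPath x) (hT : B.IsVershik T)
    {T' : (B.Telescope ns hmono h0).PathSpace ≃ (B.Telescope ns hmono h0).PathSpace}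
    (hT' : (B.Telescope ns hmono h0).IsVershik T') (m : ℤ) (z : B.PathSpace) :
    B.teleMap ns hmono h0 (B.iterZ T m z) =
      (B.Telescope ns hmono h0).iterZ T' m (B.teleMap ns hmono h0 z) :=
  (semiconj_teleMap hmax hT hT').perm_zpow m z

theorem isMinEdge_teleMap_of_le {z : B.PathSpace} {j l : ℕ}
    (hz : ∀ i, i < j → B.IsMinEdge (z.1 i)) (hl : ns l ≤ j) :
    ∀ i, i < l → (B.Telescope ns hmono h0).IsMinEdge ((B.teleMap ns hmono h0 z).1 i) := by
  intro i hi
  refine isMinEdge_telescope fun d => hz _ ?_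
  have := hmono.monotone (show i + 1 ≤ l from hi)
  have := d.isLt
  omega

end BDiagram

theorem cut_telescoping_general
    (B : BDiagram) (T : B.PathSpace ≃ B.PathSpace)
    (hproper : B.ProperlyOrdered) (hT : B.IsVershik T)
    (ns : ℕ → ℕ) (hmono : StrictMono ns) (h0 : ns 0 = 0)
    (T' : (B.Telescope ns hmono h0).PathSpace ≃ (B.Telescope ns hmono h0).PathSpace)
    (hT' : (B.Telescope ns hmono h0).IsVershik T')
    (x y : B.PathSpace)
    (j : ℕ) (hcut : B.HasCut T j x y)
    (l : ℕ) (hl₁ : ns l ≤ j) :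
    (B.Telescope ns hmono h0).HasCut T' l
      (B.teleMap ns hmono h0 x) (B.teleMap ns hmono h0 y) := by
  obtain ⟨m, hx, hy⟩ := hcut
  refine ⟨m, ?_, ?_⟩
  · rw [← BDiagram.teleMap_iterZ hproper.2 hT hT']
    exact BDiagram.isMinEdge_teleMap_of_le hx hl₁
  · rw [← BDiagram.teleMap_iterZ hproper.2 hT hT']
    exact BDiagram.isMinEdge_teleMap_of_le hy hl₁

/-- If a depth `k` pair in a simple, properly ordered
Bratteli–Vershik system has a `j` cut with `j ≥ ns 1`, and `ns l ≤ j < ns (l+1)`,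
then the image pair under the telescoping to levels `ns` has an `l` cut. -/
theorem cut_telescoping
    (B : BDiagram) (T : B.PathSpace ≃ B.PathSpace)
    (hproper : B.ProperlyOrdered) (hsimple : B.Simple) (hT : B.IsVershik T)
    (ns : ℕ → ℕ) (hmono : StrictMono ns) (h0 : ns 0 = 0)
    (T' : (B.Telescope ns hmono h0).PathSpace ≃ (B.Telescope ns hmono h0).PathSpace)
    (hT' : (B.Telescope ns hmono h0).IsVershik T')
    (k : ℕ) (x y : B.PathSpace) (hxy : B.DepthPair T k x y)
    (j : ℕ) (hj : ns 1 ≤ j) (hcut : B.HasCut T j x y)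
    (l : ℕ) (hl₁ : ns l ≤ j) (hl₂ : j < ns (l + 1)) :
    (B.Telescope ns hmono h0).HasCut T' l
      (B.teleMap ns hmono h0 x) (B.teleMap ns hmono h0 y) :=
  cut_telescoping_general B T hproper hT ns hmono h0 T' hT' x y j hcut l hl₁
end
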